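/- Let n ≥ 1, γ ∈ ℝ, and T : ℝ → ℝ. Define F : ℝ^n → ℝ^n by F(y)_i = (1−γ)·T(y_i) + (γ/n)·∑_{j=1}^n T(y_j) for i = 1,…,n. If T is differentiable at each coordinate x_1, …, x_n of a point x ∈ ℝ^n, then F is differentiable at x and the determinant of its derivative satisfies det(DF(x)) = (1−γ)^{n−1} · ∏_{k=1}^n T'(x_k). -/

import Mathlib

/-!
The coupled map factors as `F = C ∘ (T × ⋯ × T)` with `C = (1 - γ) I + (γ / n) J`, `J` the
all-ones matrix, so by the chain rule `DF(x) = C · diag (T'(x_k))`. Since `C` is a multiple of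
the identity plus a rank-one matrix, the matrix determinant lemma gives
`det C = (1 - γ)^(n-1) (1 - γ + n · γ / n) = (1 - γ)^(n-1)`.
-/

open Matrix

/-- The globally coupled map `F : ℝ^n → ℝ^n` built from a local map `T : ℝ → ℝ` with
coupling strength `γ`: `F(y)_i = (1-γ)·T(y_i) + (γ/n)·∑_j T(y_j)`. -/
noncomputable def coupledMap (n : ℕ) (γ : ℝ) (T : ℝ → ℝ) :
    (Fin n → ℝ) → (Fin n → ℝ) :=
  fun y i => (1 - γ) * T (y i) + (γ / n) * ∑ j, T (y j)

section Determinant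

variable {ι K : Type*} [Fintype ι] [DecidableEq ι] [Field K]

theorem det_smul_one_add_smul_of_one [Nonempty ι] (a b : K) :
    det (a • (1 : Matrix ι ι K) + b • of fun _ _ => 1) =
      a ^ (Fintype.card ι - 1) * (a + Fintype.card ι * b) := by
  rcases eq_or_ne a 0 with rfl | ha
  · rcases subsingleton_or_nontrivial ι with hι | hι
    · have : Unique ι := uniqueOfSubsingleton (Classical.arbitrary ι)
      simp [Fintype.card_unique]
    · obtain ⟨i, j, hij⟩ := exists_pair_ne ι
      have hpos : Fintype.card ι - 1 ≠ 0 := by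
        have := Fintype.one_lt_card_iff_nontrivial.2 hι; omega
      rw [det_zero_of_row_eq hij (by ext; simp), zero_pow hpos, zero_mul]
  · -- `a • 1 + b • J = a • (1 + u vᵀ)` with `u = b / a • 𝟙`, `v = 𝟙`: the matrix determinant lemma.
    have hrank_one : a • (1 : Matrix ι ι K) + b • of (fun _ _ => 1) =
        a • ((1 : Matrix ι ι K) +
          replicateCol Unit (fun _ : ι => b / a) * replicateRow Unit (fun _ : ι => (1 : K))) := by
      ext i j
      simp [one_apply, mul_apply, mul_add, mul_div_cancel₀ _ ha]
    rw [hrank_one, det_smul, det_one_add_replicateCol_mul_replicateRow]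
    simp only [dotProduct, one_mul, Finset.sum_const, Finset.card_univ, nsmul_eq_mul]
    nth_rw 1 [← Nat.sub_one_add_one Fintype.card_ne_zero]
    field_simp
    ring

end Determinant

theorem hasFDerivAt_pi_map {ι 𝕜 : Type*} [Fintype ι] [DecidableEq ι] [NontriviallyNormedField 𝕜]
    [CompleteSpace 𝕜] {T : ι → 𝕜 → 𝕜} {T' : ι → 𝕜} {x : ι → 𝕜}
    (hT : ∀ i, HasDerivAt (T i) (T' i) (x i)) :
    HasFDerivAt (fun y i => T i (y i)) (toLin' (diagonal T')).toContinuousLinearMap x := by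
  have hdiag : (toLin' (diagonal T')).toContinuousLinearMap =
      ContinuousLinearMap.pi fun i => T' i • ContinuousLinearMap.proj i := by
    ext1 v
    ext i
    simp [mulVec_diagonal]
  rw [hdiag]
  exact hasFDerivAt_pi.2 fun i => (hT i).comp_hasFDerivAt x (hasFDerivAt_apply i x)

noncomputable def couplingMatrix (n : ℕ) (γ : ℝ) : Matrix (Fin n) (Fin n) ℝ :=
  (1 - γ) • 1 + (γ / n) • of fun _ _ => 1

theorem det_couplingMatrix (n : ℕ) (γ : ℝ) : det (couplingMatrix n γ) = (1 - γ) ^ (n - 1) := by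
  rcases Nat.eq_zero_or_pos n with rfl | hn
  · simp
  · have : Nonempty (Fin n) := ⟨⟨0, hn⟩⟩
    have hn' : (n : ℝ) ≠ 0 := by positivity
    rw [couplingMatrix, det_smul_one_add_smul_of_one, Fintype.card_fin, mul_div_cancel₀ _ hn']
    ring

theorem coupledMap_eq_mulVec (n : ℕ) (γ : ℝ) (T : ℝ → ℝ) :
    coupledMap n γ T = fun y => couplingMatrix n γ *ᵥ fun i => T (y i) := by
  ext y i
  simp only [coupledMap, couplingMatrix, add_mulVec, smul_mulVec, one_mulVec, Pi.add_apply,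
    Pi.smul_apply, smul_eq_mul]
  simp [mulVec, dotProduct, Finset.mul_sum]

theorem hasFDerivAt_coupledMap {n : ℕ} (γ : ℝ) {T : ℝ → ℝ} {T' : Fin n → ℝ} {x : Fin n → ℝ}
    (hT : ∀ i, HasDerivAt T (T' i) (x i)) :
    HasFDerivAt (coupledMap n γ T)
      (toLin' (couplingMatrix n γ * diagonal T')).toContinuousLinearMap x := by
  have hcomp : (toLin' (couplingMatrix n γ * diagonal T')).toContinuousLinearMap =
      (toLin' (couplingMatrix n γ)).toContinuousLinearMap.comp
        (toLin' (diagonal T')).toContinuousLinearMap := by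
    ext1 v
    simp [mulVec_mulVec]
  rw [coupledMap_eq_mulVec, hcomp]
  exact (toLin' (couplingMatrix n γ)).toContinuousLinearMap.hasFDerivAt.comp x
    (hasFDerivAt_pi_map (T := fun _ => T) hT)

theorem det_fderiv_coupledMap_general (n : ℕ) (γ : ℝ) (T : ℝ → ℝ)
    (x : Fin n → ℝ) (hdiff : ∀ i : Fin n, DifferentiableAt ℝ T (x i)) :
    DifferentiableAt ℝ (coupledMap n γ T) x ∧
      (fderiv ℝ (coupledMap n γ T) x).det =
        (1 - γ) ^ (n - 1) * ∏ k : Fin n, deriv T (x k) := by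
  have hF := hasFDerivAt_coupledMap γ fun i => (hdiff i).hasDerivAt
  refine ⟨hF.differentiableAt, ?_⟩
  rw [hF.fderiv, LinearMap.det_toContinuousLinearMap, LinearMap.det_toLin', det_mul,
    det_couplingMatrix, det_diagonal]

/-- if `T` is differentiable at every coordinate of `x ∈ ℝ^n`, then the
globally coupled map `F` is differentiable at `x` and
`det DF(x) = (1−γ)^{n−1} · ∏_k T'(x_k)`. -/
theorem det_fderiv_coupledMap (n : ℕ) (hn : 1 ≤ n) (γ : ℝ) (T : ℝ → ℝ)
    (x : Fin n → ℝ) (hdiff : ∀ i : Fin n, DifferentiableAt ℝ T (x i)) :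
    DifferentiableAt ℝ (coupledMap n γ T) x ∧
      (fderiv ℝ (coupledMap n γ T) x).det =
        (1 - γ) ^ (n - 1) * ∏ k : Fin n, deriv T (x k) :=
  det_fderiv_coupledMap_general n γ T x hdiff
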